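/- arXiv:2501.08821 — 5 statements merged into one kernel-verified Lean document; each statement's English description precedes it below -/
import Mathlib

section
/- Let X be a topological space, 𝒟 a domain space over X, and ℋ ⊆ 𝒫(X) a hypothesis space such that OOD detection for 𝒟 is realizable in ℋ (i.e., inf_{h∈ℋ} R^α_D(h) = 0 for every D ∈ 𝒟 and every α ∈ (0,1)). Then for any fixed α ∈ (0,1), OOD detection is uniformly (respectively, non-uniformly) learnable for 𝒟 in ℋ with a priori known OOD probability α if and only if there is a uniform (respectively, non-uniform) learner that, with probability at least 1−δ, outputs a hypothesis h ∈ ℋ simultaneously satisfying R^in_D(h) ≤ ε and R^out_D(h) ≤ ε, i.e., achieving risk at most ε for every OOD probability α' ∈ [0,1] simultaneously. -/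
open MeasureTheory ENNReal Set Filter

noncomputable section

/-- A domain over an instance space `X` is a pair of (Borel) measures on `X`:
the ID distribution and the OOD distribution. -/
structure Domain (X : Type*) [MeasurableSpace X] where
  inD : Measure X
  outD : Measure X

namespace Domain

variable {X : Type*} [MeasurableSpace X]

/-- Both components of the domain are probability measures. -/
def IsProb (D : Domain X) : Prop :=
  IsProbabilityMeasure D.inD ∧ IsProbabilityMeasure D.outD

/-- The risk `R^α_D(h) = (1−α)·D_in(X∖h) + α·D_out(h)` of a hypothesis `h ⊆ X`. -/
def risk (D : Domain X) (α : ℝ) (h : Set X) : ℝ≥0∞ :=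
  ENNReal.ofReal (1 - α) * D.inD hᶜ + ENNReal.ofReal α * D.outD h

/-- The ID risk `R^in_D(h) = D_in(X∖h)`. -/
def inRisk (D : Domain X) (h : Set X) : ℝ≥0∞ := D.inD hᶜ

/-- The OOD risk `R^out_D(h) = D_out(h)`. -/
def outRisk (D : Domain X) (h : Set X) : ℝ≥0∞ := D.outD h

end Domain

/-- The distribution of `N` i.i.d. samples from `μ`. -/
def iidSamples {X : Type*} [MeasurableSpace X] (μ : Measure X) (N : ℕ) :
    Measure (Fin N → X) :=
  Measure.pi fun _ => μ

/-- A (deterministic) learning algorithm: given accuracy `ε`, confidence `δ`, a sample size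
and a tuple of samples, it outputs a hypothesis. -/
abbrev Learner (X : Type*) : Type _ := ℝ → ℝ → (n : ℕ) → (Fin n → X) → Set X

/-- Uniform learnability of OOD detection for the domain space `𝒟` in the hypothesis space `H`,
with a priori known OOD probability `α`: there are a sample-complexity function `N(ε,δ)` and a
learner which, for every `ε, δ ∈ (0,1/2)` and every domain `D ∈ 𝒟`, given `N(ε,δ)` i.i.d.
samples from `D_in`, outputs with probability at least `1−δ` a hypothesis in `H` whose risk is
within `ε` of the best risk achievable in `H`. -/
def UniformlyLearnable {X : Type*} [MeasurableSpace X]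
    (𝒟 : Set (Domain X)) (H : Set (Set X)) (α : ℝ) : Prop :=
  ∃ (N : ℝ → ℝ → ℕ) (A : Learner X),
    (∀ ε δ n S, A ε δ n S ∈ H) ∧
    ∀ ε δ : ℝ, 0 < ε → ε < 1/2 → 0 < δ → δ < 1/2 →
      ∀ D ∈ 𝒟,
        ENNReal.ofReal (1 - δ) ≤
          iidSamples D.inD (N ε δ)
            {S | D.risk α (A ε δ (N ε δ) S) ≤ (⨅ h' ∈ H, D.risk α h') + ENNReal.ofReal ε}

/-- Non-uniform learnability of OOD detection: as in `UniformlyLearnable`, except that the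
number of samples the learner needs may depend on the domain `D ∈ 𝒟`. -/
def NonUniformlyLearnable {X : Type*} [MeasurableSpace X]
    (𝒟 : Set (Domain X)) (H : Set (Set X)) (α : ℝ) : Prop :=
  ∃ A : Learner X,
    (∀ ε δ n S, A ε δ n S ∈ H) ∧
    ∀ ε δ : ℝ, 0 < ε → ε < 1/2 → 0 < δ → δ < 1/2 →
      ∀ D ∈ 𝒟, ∃ N : ℕ,
        ENNReal.ofReal (1 - δ) ≤
          iidSamples D.inD N
            {S | D.risk α (A ε δ N S) ≤ (⨅ h' ∈ H, D.risk α h') + ENNReal.ofReal ε}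

/-- The support of a measure on a topological space: the set of points all of whose open
neighbourhoods have positive measure. -/
def msupport {X : Type*} [MeasurableSpace X] [TopologicalSpace X] (μ : Measure X) : Set X :=
  {x | ∀ U : Set X, IsOpen U → x ∈ U → 0 < μ U}

/-- The Disjoint Supports Assumption. -/
def Domain.DSA {X : Type*} [MeasurableSpace X] [TopologicalSpace X] (D : Domain X) : Prop :=
  msupport D.inD ∩ msupport D.outD = ∅

section Aux

variable {X : Type*} [MeasurableSpace X]

lemma risk_le_of_both {D : Domain X} {α ε : ℝ} (hα : α ∈ Set.Ioo (0 : ℝ) 1) (hε : 0 ≤ ε)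
    {h : Set X} (hin : D.inRisk h ≤ ENNReal.ofReal ε) (hout : D.outRisk h ≤ ENNReal.ofReal ε) :
    D.risk α h ≤ ENNReal.ofReal ε := by
  have h1 : ENNReal.ofReal (1 - α) * D.inD hᶜ ≤ ENNReal.ofReal ((1 - α) * ε) := by
    rw [ENNReal.ofReal_mul (by linarith [hα.2])]
    exact mul_le_mul_right hin _
  have h2 : ENNReal.ofReal α * D.outD h ≤ ENNReal.ofReal (α * ε) := by
    rw [ENNReal.ofReal_mul hα.1.le]
    exact mul_le_mul_right hout _
  calc D.risk α h ≤ ENNReal.ofReal ((1 - α) * ε) + ENNReal.ofReal (α * ε) :=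
        add_le_add h1 h2
    _ = ENNReal.ofReal ε := by
        rw [← ENNReal.ofReal_add (by nlinarith [hα.2]) (mul_nonneg hα.1.le hε)]
        ring_nf

lemma both_of_risk_le {D : Domain X} {α ε : ℝ} (hα : α ∈ Set.Ioo (0 : ℝ) 1) (hε : 0 ≤ ε)
    {h : Set X} (hr : D.risk α h ≤ ENNReal.ofReal (ε * min α (1 - α))) :
    D.inRisk h ≤ ENNReal.ofReal ε ∧ D.outRisk h ≤ ENNReal.ofReal ε := by
  have h1a : (0:ℝ) < 1 - α := by linarith [hα.2]
  constructor
  · have key : ENNReal.ofReal (1 - α) * D.inD hᶜ ≤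
        ENNReal.ofReal (1 - α) * ENNReal.ofReal ε := by
      calc ENNReal.ofReal (1 - α) * D.inD hᶜ ≤ D.risk α h := le_add_right le_rfl
        _ ≤ ENNReal.ofReal (ε * min α (1 - α)) := hr
        _ ≤ ENNReal.ofReal ((1 - α) * ε) := by
            apply ENNReal.ofReal_le_ofReal
            have := min_le_right α (1 - α)
            nlinarith
        _ = ENNReal.ofReal (1 - α) * ENNReal.ofReal ε := by
            rw [← ENNReal.ofReal_mul h1a.le]
    exact (ENNReal.mul_le_mul_iff_right (by simp [ENNReal.ofReal_pos.mpr h1a, ne_of_gt]) (by simp)).mp key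
  · have key : ENNReal.ofReal α * D.outD h ≤
        ENNReal.ofReal α * ENNReal.ofReal ε := by
      calc ENNReal.ofReal α * D.outD h ≤ D.risk α h := le_add_left le_rfl
        _ ≤ ENNReal.ofReal (ε * min α (1 - α)) := hr
        _ ≤ ENNReal.ofReal (α * ε) := by
            apply ENNReal.ofReal_le_ofReal
            have := min_le_left α (1 - α)
            nlinarith
        _ = ENNReal.ofReal α * ENNReal.ofReal ε := by
            rw [← ENNReal.ofReal_mul hα.1.le]
    exact (ENNReal.mul_le_mul_iff_right (by simp [ENNReal.ofReal_pos.mpr hα.1, ne_of_gt]) (by simp)).mp key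

end Aux

/-- **Equivalence of learnability with known and unknown OOD probability.**
If OOD detection is realizable for `𝒟` in `H`, then for any fixed `α ∈ (0,1)`, OOD detection
is uniformly (resp. non-uniformly) learnable for `𝒟` in `H` with a priori known OOD
probability `α` iff there is a uniform (resp. non-uniform) learner whose output hypothesis,
with probability at least `1 − δ`, simultaneously satisfies `R^in_D(h) ≤ ε` and
`R^out_D(h) ≤ ε` (equivalently, has risk at most `ε` for every OOD probability `α' ∈ [0,1]`). -/
theorem learnability_known_iff_unknown_alpha
    {X : Type*} [MeasurableSpace X] [TopologicalSpace X]
    (𝒟 : Set (Domain X)) (H : Set (Set X))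
    (hprob : ∀ D ∈ 𝒟, D.IsProb)
    (hreal : ∀ D ∈ 𝒟, ∀ β ∈ Set.Ioo (0 : ℝ) 1, (⨅ h ∈ H, D.risk β h) = 0)
    (α : ℝ) (hα : α ∈ Set.Ioo (0 : ℝ) 1) :
    (UniformlyLearnable 𝒟 H α ↔
      ∃ (N : ℝ → ℝ → ℕ) (A : Learner X),
        (∀ ε δ n S, A ε δ n S ∈ H) ∧
        ∀ ε δ : ℝ, 0 < ε → ε < 1/2 → 0 < δ → δ < 1/2 →
          ∀ D ∈ 𝒟,
            ENNReal.ofReal (1 - δ) ≤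
              iidSamples D.inD (N ε δ)
                {S | D.inRisk (A ε δ (N ε δ) S) ≤ ENNReal.ofReal ε ∧
                     D.outRisk (A ε δ (N ε δ) S) ≤ ENNReal.ofReal ε}) ∧
    (NonUniformlyLearnable 𝒟 H α ↔
      ∃ A : Learner X,
        (∀ ε δ n S, A ε δ n S ∈ H) ∧
        ∀ ε δ : ℝ, 0 < ε → ε < 1/2 → 0 < δ → δ < 1/2 →
          ∀ D ∈ 𝒟, ∃ N : ℕ,
            ENNReal.ofReal (1 - δ) ≤
              iidSamples D.inD N
                {S | D.inRisk (A ε δ N S) ≤ ENNReal.ofReal ε ∧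
                     D.outRisk (A ε δ N S) ≤ ENNReal.ofReal ε}) := by
  have hc0 : 0 < min α (1 - α) := lt_min hα.1 (by linarith [hα.2])
  have hc1 : min α (1 - α) < 1 := lt_of_le_of_lt (min_le_left _ _) hα.2
  constructor
  · constructor
    · rintro ⟨N, A, hA, hL⟩
      refine ⟨fun ε δ => N (ε * min α (1 - α)) δ, fun ε δ => A (ε * min α (1 - α)) δ,
        fun _ _ _ _ => hA _ _ _ _, ?_⟩
      intro ε δ hε hε2 hδ hδ2 D hD
      have hεc : 0 < ε * min α (1 - α) := mul_pos hε hc0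
      have hεc2 : ε * min α (1 - α) < 1/2 := by nlinarith
      refine le_trans (hL (ε * min α (1 - α)) δ hεc hεc2 hδ hδ2 D hD) (measure_mono ?_)
      intro S hS
      simp only [Set.mem_setOf_eq] at hS ⊢
      rw [hreal D hD α hα, zero_add] at hS
      exact both_of_risk_le hα hε.le hS
    · rintro ⟨N, A, hA, hL⟩
      refine ⟨N, A, hA, ?_⟩
      intro ε δ hε hε2 hδ hδ2 D hD
      refine le_trans (hL ε δ hε hε2 hδ hδ2 D hD) (measure_mono ?_)
      intro S hS
      simp only [Set.mem_setOf_eq] at hS ⊢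
      rw [hreal D hD α hα, zero_add]
      exact risk_le_of_both hα hε.le hS.1 hS.2
  · constructor
    · rintro ⟨A, hA, hL⟩
      refine ⟨fun ε δ => A (ε * min α (1 - α)) δ, fun _ _ _ _ => hA _ _ _ _, ?_⟩
      intro ε δ hε hε2 hδ hδ2 D hD
      have hεc : 0 < ε * min α (1 - α) := mul_pos hε hc0
      have hεc2 : ε * min α (1 - α) < 1/2 := by nlinarith
      obtain ⟨N, hN⟩ := hL (ε * min α (1 - α)) δ hεc hεc2 hδ hδ2 D hD
      refine ⟨N, le_trans hN (measure_mono ?_)⟩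
      intro S hS
      simp only [Set.mem_setOf_eq] at hS ⊢
      rw [hreal D hD α hα, zero_add] at hS
      exact both_of_risk_le hα hε.le hS
    · rintro ⟨A, hA, hL⟩
      refine ⟨A, hA, ?_⟩
      intro ε δ hε hε2 hδ hδ2 D hD
      obtain ⟨N, hN⟩ := hL ε δ hε hε2 hδ hδ2 D hD
      refine ⟨N, le_trans hN (measure_mono ?_)⟩
      intro S hS
      simp only [Set.mem_setOf_eq] at hS ⊢
      rw [hreal D hD α hα, zero_add]
      exact risk_le_of_both hα hε.le hS.1 hS.2
end
end

section
/- Let D = (D_in, D_out) be a domain over a measurable space X that has overlap between its ID and OOD distributions, i.e., there is a σ-finite measure μ on X such that D_in and D_out are absolutely continuous with respect to μ with Radon–Nikodym densities f_in and f_out, and μ({x ∈ X : f_in(x) > 0 and f_out(x) > 0}) > 0. Then for every α ∈ (0,1), inf over all hypotheses h ⊆ X of R^α_D(h) > 0; in particular, inf_{h ⊆ X} R^α_D(h) ≥ ∫_{A_overlap} min{(1−α)f_in, α f_out} dμ > 0, where A_overlap = {x : f_in(x) > 0, f_out(x) > 0}. Consequently any domain space containing such a domain is not realizable in any hypothesis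 space. -/
open MeasureTheory ENNReal Set Filter

noncomputable section

/-! Whatever `h` is, the integrand `min ((1-α) f_in) (α f_out)` is at most `(1-α) f_in` off `h`
and at most `α f_out` on `h`, so its integral is bounded by the risk of `h`. The integrand is
positive exactly on the overlap region, which has positive measure. -/

section OverlapRisk

variable {X : Type*} [MeasurableSpace X] {μ : Measure X}

theorem setLIntegral_min_le_compl_add (F G : X → ℝ≥0∞) (s h : Set X) :
    ∫⁻ x in s, min (F x) (G x) ∂μ ≤ ∫⁻ x in hᶜ, F x ∂μ + ∫⁻ x in h, G x ∂μ :=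
  calc ∫⁻ x in s, min (F x) (G x) ∂μ ≤ ∫⁻ x in hᶜ ∪ h, min (F x) (G x) ∂μ := by
        rw [compl_union_self, setLIntegral_univ]
        exact setLIntegral_le_lintegral s _
    _ ≤ ∫⁻ x in hᶜ, min (F x) (G x) ∂μ + ∫⁻ x in h, min (F x) (G x) ∂μ :=
        lintegral_union_le _ _ _
    _ ≤ ∫⁻ x in hᶜ, F x ∂μ + ∫⁻ x in h, G x ∂μ := by
        gcongr with x x
        · exact min_le_left _ _
        · exact min_le_right _ _

theorem setLIntegral_const_mul_le_withDensity (c : ℝ≥0∞) {f : X → ℝ≥0∞} (hf : Measurable f)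
    (s : Set X) : ∫⁻ x in s, c * f x ∂μ ≤ c * μ.withDensity f s := by
  rw [lintegral_const_mul c hf]
  gcongr
  exact withDensity_apply_le f s

theorem setLIntegral_min_const_mul_pos {f g : X → ℝ≥0∞} (hf : Measurable f) (hg : Measurable g)
    {a b : ℝ≥0∞} (ha : a ≠ 0) (hb : b ≠ 0) (hoverlap : 0 < μ {x | 0 < f x ∧ 0 < g x}) :
    0 < ∫⁻ x in {x | 0 < f x ∧ 0 < g x}, min (a * f x) (b * g x) ∂μ := by
  rw [setLIntegral_pos_iff ((hf.const_mul a).min (hg.const_mul b))]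
  refine hoverlap.trans_le (measure_mono fun x hx => ⟨?_, hx⟩)
  exact (lt_min (ENNReal.mul_pos ha hx.1.ne') (ENNReal.mul_pos hb hx.2.ne')).ne'

theorem Domain.setLIntegral_min_le_risk (D : Domain X) {f_in f_out : X → ℝ≥0∞}
    (hfin : Measurable f_in) (hfout : Measurable f_out)
    (hin : D.inD = μ.withDensity f_in) (hout : D.outD = μ.withDensity f_out) (α : ℝ)
    (s h : Set X) :
    ∫⁻ x in s, min (ENNReal.ofReal (1 - α) * f_in x) (ENNReal.ofReal α * f_out x) ∂μ
      ≤ D.risk α h := by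
  refine (setLIntegral_min_le_compl_add _ _ s h).trans (add_le_add ?_ ?_)
  · exact hin ▸ setLIntegral_const_mul_le_withDensity _ hfin hᶜ
  · exact hout ▸ setLIntegral_const_mul_le_withDensity _ hfout h

end OverlapRisk

theorem overlap_not_realizable_general
    {X : Type*} [MeasurableSpace X] (D : Domain X)
    (μ : Measure X)
    (f_in f_out : X → ℝ≥0∞) (hfin : Measurable f_in) (hfout : Measurable f_out)
    (hin : D.inD = μ.withDensity f_in) (hout : D.outD = μ.withDensity f_out)
    (hoverlap : 0 < μ {x | 0 < f_in x ∧ 0 < f_out x})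
    (α : ℝ) (hα : α ∈ Set.Ioo (0 : ℝ) 1) :
    (0 < ∫⁻ x in {x | 0 < f_in x ∧ 0 < f_out x},
        min (ENNReal.ofReal (1 - α) * f_in x) (ENNReal.ofReal α * f_out x) ∂μ) ∧
    (∀ h : Set X,
      (∫⁻ x in {x | 0 < f_in x ∧ 0 < f_out x},
        min (ENNReal.ofReal (1 - α) * f_in x) (ENNReal.ofReal α * f_out x) ∂μ)
          ≤ D.risk α h) ∧
    0 < ⨅ h : Set X, D.risk α h := by
  have hpos := setLIntegral_min_const_mul_pos hfin hfout
    (ENNReal.ofReal_pos.2 (sub_pos.2 hα.2)).ne' (ENNReal.ofReal_pos.2 hα.1).ne' hoverlap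
  have hbound := D.setLIntegral_min_le_risk hfin hfout hin hout α {x | 0 < f_in x ∧ 0 < f_out x}
  exact ⟨hpos, hbound, hpos.trans_le (le_iInf hbound)⟩

/-- **Overlapping domains are not realizable.** If the ID and OOD distributions of a domain `D`
have densities `f_in`, `f_out` w.r.t. a σ-finite measure `μ`, and the overlap region
`A = {x | f_in x > 0 ∧ f_out x > 0}` has positive `μ`-measure, then for every `α ∈ (0,1)` the
risk of every hypothesis is bounded below by `∫_A min{(1−α)f_in, α f_out} dμ > 0`;
in particular the infimum of the risk over all hypotheses is positive. -/
theorem overlap_not_realizable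
    {X : Type*} [MeasurableSpace X] (D : Domain X) (hD : D.IsProb)
    (μ : Measure X) (hσ : SigmaFinite μ)
    (f_in f_out : X → ℝ≥0∞) (hfin : Measurable f_in) (hfout : Measurable f_out)
    (hin : D.inD = μ.withDensity f_in) (hout : D.outD = μ.withDensity f_out)
    (hoverlap : 0 < μ {x | 0 < f_in x ∧ 0 < f_out x})
    (α : ℝ) (hα : α ∈ Set.Ioo (0 : ℝ) 1) :
    (0 < ∫⁻ x in {x | 0 < f_in x ∧ 0 < f_out x},
        min (ENNReal.ofReal (1 - α) * f_in x) (ENNReal.ofReal α * f_out x) ∂μ) ∧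
    (∀ h : Set X,
      (∫⁻ x in {x | 0 < f_in x ∧ 0 < f_out x},
        min (ENNReal.ofReal (1 - α) * f_in x) (ENNReal.ofReal α * f_out x) ∂μ)
          ≤ D.risk α h) ∧
    0 < ⨅ h : Set X, D.risk α h :=
  overlap_not_realizable_general D μ f_in f_out hfin hfout hin hout hoverlap α hα
end
end

section
/- Let 𝒟 be a domain space over an instance space X and let α ∈ (0,1). Let 𝓑 : X* → 𝒫(X) be a procedure mapping finite sample sequences to hypotheses such that: (i) for every domain D ∈ 𝒟 and every ε > 0, the probability over S ∼ D_in^n that R^in_D(𝓑(S)) > ε tends to 0 as n → ∞; and (ii) for every ε > 0 there exists a positive integer N such that for all n > N and all D ∈ 𝒟, the probability over S ∼ D_in^n that R^out_D(𝓑(S)) > ε is exactly 0. Then OOD detection for 𝒟 is non-uniformly learnable in 𝒫(X). -/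
/-!
Run the procedure `B` itself, ignoring `ε` and `δ`. If both the ID and the OOD risk of a
hypothesis are at most `ε`, so is its `α`-risk, a convex combination of the two. For a domain
`D`, past the uniform threshold of (ii) the OOD risk is surely at most `ε`, and by (i) the ID
risk exceeds `ε` with probability below `δ` once the sample is large enough; a sample size
beyond both thresholds works.
-/

open MeasureTheory ENNReal Set Filter

noncomputable section

instance iidSamples.instIsProbabilityMeasure {X : Type*} [MeasurableSpace X] (μ : Measure X)
    [IsProbabilityMeasure μ] (n : ℕ) : IsProbabilityMeasure (iidSamples μ n) :=
  Measure.pi.instIsProbabilityMeasure _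

theorem one_sub_le_measure_of_measure_compl_le {Ω : Type*} [MeasurableSpace Ω]
    {μ : Measure Ω} [IsProbabilityMeasure μ] {s : Set Ω} {c : ℝ≥0∞} (h : μ sᶜ ≤ c) :
    1 - c ≤ μ s :=
  tsub_le_iff_right.2 <| calc
    1 = μ univ := measure_univ.symm
    _ ≤ μ s + μ sᶜ := measure_univ_le_add_compl s
    _ ≤ μ s + c := add_le_add_right h _

namespace Domain

variable {X : Type*} [MeasurableSpace X] {D : Domain X} {α : ℝ}

theorem risk_le_of_inRisk_le_of_outRisk_le (hα0 : 0 ≤ α) (hα1 : α ≤ 1) {h : Set X}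
    {c : ℝ≥0∞} (hin : D.inRisk h ≤ c) (hout : D.outRisk h ≤ c) : D.risk α h ≤ c :=
  calc D.risk α h ≤ ENNReal.ofReal (1 - α) * c + ENNReal.ofReal α * c := by
        unfold risk; gcongr; exacts [hin, hout]
    _ = c := by
        rw [← add_mul, ← ENNReal.ofReal_add (by linarith) hα0, sub_add_cancel,
          ENNReal.ofReal_one, one_mul]

theorem setOf_not_risk_le_subset (hα0 : 0 ≤ α) (hα1 : α ≤ 1) {Ω : Type*} (f : Ω → Set X)
    (r c : ℝ≥0∞) :
    {S | D.risk α (f S) ≤ r + c}ᶜ ⊆ {S | c < D.inRisk (f S)} ∪ {S | c < D.outRisk (f S)} := by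
  intro S hS
  by_contra hsmall
  simp only [mem_union, mem_ofPred_eq, not_or, not_lt] at hsmall
  exact hS ((risk_le_of_inRisk_le_of_outRisk_le hα0 hα1 hsmall.1 hsmall.2).trans le_add_self)

end Domain

/-- **A procedure with vanishing ID risk and eventually surely small OOD risk yields a
non-uniform learner.** -/
theorem procedure_to_nonuniform_learner
    {X : Type*} [MeasurableSpace X]
    (𝒟 : Set (Domain X)) (hprob : ∀ D ∈ 𝒟, D.IsProb)
    (α : ℝ) (hα : α ∈ Set.Ioo (0 : ℝ) 1)
    (B : (n : ℕ) → (Fin n → X) → Set X)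
    (hID : ∀ D ∈ 𝒟, ∀ ε : ℝ, 0 < ε →
      Filter.Tendsto
        (fun n => iidSamples D.inD n {S | ENNReal.ofReal ε < D.inRisk (B n S)})
        Filter.atTop (nhds 0))
    (hOOD : ∀ ε : ℝ, 0 < ε → ∃ N : ℕ, ∀ n > N, ∀ D ∈ 𝒟,
      iidSamples D.inD n {S | ENNReal.ofReal ε < D.outRisk (B n S)} = 0) :
    NonUniformlyLearnable 𝒟 Set.univ α := by
  refine ⟨fun _ _ n S => B n S, fun _ _ _ _ => mem_univ _, ?_⟩
  intro ε δ hε _ hδ _ D hD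
  have := (hprob D hD).1
  obtain ⟨N₀, hN₀⟩ := hOOD ε hε
  obtain ⟨N₁, hN₁⟩ := eventually_atTop.1
    ((hID D hD ε hε).eventually_lt_const (ENNReal.ofReal_pos.2 hδ))
  refine ⟨max N₀ N₁ + 1, ?_⟩
  rw [ENNReal.ofReal_sub _ hδ.le, ENNReal.ofReal_one]
  apply one_sub_le_measure_of_measure_compl_le
  calc _ ≤ _ := measure_mono (D.setOf_not_risk_le_subset hα.1.le hα.2.le _ _ _)
    _ ≤ _ := measure_union_le _ _
    _ ≤ ENNReal.ofReal δ + 0 :=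
        add_le_add (hN₁ _ (by omega)).le (hN₀ _ (by omega) D hD).le
    _ = ENNReal.ofReal δ := add_zero _
end
end

section
/- (Far-OOD Detection.) Let τ > 0 be given a priori and let 𝒟 be a domain space over ℝⁿ in which every domain D = (D_in, D_out) satisfies dist(supp(D_in), supp(D_out)) > τ. Then for any α ∈ (0,1), OOD detection is non-uniformly learnable for 𝒟 in 𝒫(ℝⁿ); in particular, the procedure that maps a sample set S drawn from D_in to the hypothesis h = ⋃_{s∈S} cl(B(s,τ)) (the union of closed τ-balls around the samples) always has OOD risk 0, and its ID risk converges to 0 in probability as the sample size tends to infinity. -/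
/-!
Every sample lies almost surely in the ID support, and the Far Supports Assumption keeps each
closed `τ`-ball around such a point off the OOD support, so the OOD risk of the union of balls
vanishes. For the ID risk, separability lets finitely many `τ/2`-balls of positive ID mass
cover all but `ε` of the ID mass; once each of them contains a sample, the `τ`-balls around the
samples contain them all, and the probability that one of them is missed is at most
`∑ₖ (1 - D_in(Bₖ))^N → 0`. Since the sample size may depend on the domain, this consistency
already gives non-uniform learnability.
-/

open MeasureTheory ENNReal Set Filter

noncomputable section

/-- The instance space `ℝⁿ`. -/
abbrev Euc (n : ℕ) : Type := EuclideanSpace ℝ (Fin n)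

/-- The (extended) distance between two sets. -/
def setEDist {X : Type*} [PseudoEMetricSpace X] (A B : Set X) : ℝ≥0∞ :=
  ⨅ x ∈ A, EMetric.infEdist x B

/-- The `τ`-Far Supports Assumption: the supports of the ID and OOD distributions are at
distance more than `τ`. -/
def Domain.FSA {n : ℕ} (D : Domain (Euc n)) (τ : ℝ) : Prop :=
  ENNReal.ofReal τ < setEDist (msupport D.inD) (msupport D.outD)

/-- The Bounded ID Support Assumption: the support of the ID distribution has diameter
less than `R`. -/
def Domain.BoundedID {n : ℕ} (D : Domain (Euc n)) (R : ℝ) : Prop :=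
  EMetric.diam (msupport D.inD) < ENNReal.ofReal R

open Metric TopologicalSpace Topology

lemma msupport_eq_support {X : Type*} [MeasurableSpace X] [TopologicalSpace X]
    (μ : Measure X) : msupport μ = μ.support := by
  rw [Measure.support_eq_forall_isOpen]
  exact Set.ext fun _ => forall_congr' fun _ => imp.swap

lemma ae_mem_msupport {X : Type*} [MeasurableSpace X] [TopologicalSpace X]
    [HereditarilyLindelofSpace X] (μ : Measure X) : ∀ᵐ x ∂μ, x ∈ msupport μ := by
  rw [msupport_eq_support]
  exact Measure.support_mem_ae

lemma closedBall_subset_compl_of_ofReal_lt_setEDist {X : Type*} [PseudoMetricSpace X]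
    {A B : Set X} {τ : ℝ} (hAB : ENNReal.ofReal τ < setEDist A B) {s : X} (hs : s ∈ A) :
    closedBall s τ ⊆ Bᶜ := by
  intro x hx hxB
  have hle : setEDist A B ≤ edist s x :=
    (iInf₂_le s hs).trans (Metric.infEDist_le_edist_of_mem hxB)
  rw [edist_dist, dist_comm] at hle
  exact (hAB.trans_le hle).not_ge (ENNReal.ofReal_le_ofReal hx)

namespace Domain

variable {X : Type*} [MeasurableSpace X]

lemma outRisk_iUnion_closedBall_eq_zero {n : ℕ} {D : Domain (Euc n)} {τ : ℝ} (hfar : D.FSA τ)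
    {ι : Type*} {S : ι → Euc n} (hS : ∀ i, S i ∈ msupport D.inD) :
    D.outRisk (⋃ i, closedBall (S i) τ) = 0 :=
  measure_mono_null
    (iUnion_subset fun i => closedBall_subset_compl_of_ofReal_lt_setEDist hfar (hS i))
    (ae_mem_msupport D.outD)

lemma risk_le_inRisk_of_outRisk_eq_zero (D : Domain X) {α : ℝ} (hα : 0 ≤ α) {h : Set X}
    (hout : D.outRisk h = 0) : D.risk α h ≤ D.inRisk h := by
  rw [risk, show D.outD h = 0 from hout, mul_zero, add_zero]
  exact mul_le_of_le_one_left' (ENNReal.ofReal_le_one.2 (by linarith))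

end Domain

section Sampling

variable {X : Type*} [MeasurableSpace X]

lemma iidSamples_setOf_forall_notMem (μ : Measure X) [SigmaFinite μ] (N : ℕ) (B : Set X) :
    iidSamples μ N {S | ∀ i, S i ∉ B} = μ Bᶜ ^ N := by
  have hpi : {S : Fin N → X | ∀ i, S i ∉ B} = univ.pi fun _ => Bᶜ := by
    ext S; simp
  rw [hpi, iidSamples, Measure.pi_pi, Finset.prod_const, Finset.card_univ, Fintype.card_fin]

lemma ae_iidSamples_forall_mem {μ : Measure X} [SigmaFinite μ] {s : Set X}
    (hs : ∀ᵐ x ∂μ, x ∈ s) (N : ℕ) : ∀ᵐ S ∂iidSamples μ N, ∀ i, S i ∈ s :=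
  ae_all_iff.2 fun _ => Measure.tendsto_eval_ae_ae.eventually hs

lemma nonUniformlyLearnable_of_tendsto {𝒟 : Set (Domain X)} {H : Set (Set X)} {α : ℝ}
    (hprob : ∀ D ∈ 𝒟, IsProbabilityMeasure D.inD) (h : (N : ℕ) → (Fin N → X) → Set X)
    (hH : ∀ N S, h N S ∈ H)
    (hconv : ∀ D ∈ 𝒟, ∀ ε : ℝ, 0 < ε →
      Tendsto (fun N => iidSamples D.inD N {S | ENNReal.ofReal ε < D.risk α (h N S)})
        atTop (𝓝 0)) :
    NonUniformlyLearnable 𝒟 H α := by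
  refine ⟨fun _ _ => h, fun _ _ => hH, fun ε δ hε _ hδ _ D hD => ?_⟩
  have := hprob D hD
  obtain ⟨N, hN⟩ := ((hconv D hD ε hε).eventually (gt_mem_nhds (ENNReal.ofReal_pos.2 hδ))).exists
  refine ⟨N, ?_⟩
  let bad := {S | ENNReal.ofReal ε < D.risk α (h N S)}
  have : IsProbabilityMeasure (iidSamples D.inD N) := by unfold iidSamples; infer_instance
  calc ENNReal.ofReal (1 - δ) = 1 - ENNReal.ofReal δ := by
        rw [ENNReal.ofReal_sub _ hδ.le, ENNReal.ofReal_one]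
    _ ≤ 1 - iidSamples D.inD N bad := tsub_le_tsub_left hN.le _
    _ ≤ iidSamples D.inD N badᶜ := by
        rw [tsub_le_iff_left, ← measure_univ (μ := iidSamples D.inD N)]
        exact measure_univ_le_add_compl bad
    _ ≤ _ := measure_mono fun S (hS : ¬ENNReal.ofReal ε < D.risk α (h N S)) =>
        (not_lt.1 hS).trans le_add_self

end Sampling

section Covering

variable {X : Type*} [PseudoMetricSpace X]

lemma iUnion_ball_subset_iUnion_closedBall {ι : Type*} {S : ι → X} {t : Finset X} {r : ℝ}
    (hS : ∀ y ∈ t, ∃ i, S i ∈ ball y (r / 2)) :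
    ⋃ y ∈ t, ball y (r / 2) ⊆ ⋃ i, closedBall (S i) r := by
  simp only [iUnion_subset_iff]
  intro y hy x hx
  obtain ⟨i, hi⟩ := hS y hy
  refine mem_iUnion.2 ⟨i, mem_closedBall.2 ?_⟩
  calc dist x (S i) ≤ dist x y + dist (S i) y := dist_triangle_right _ _ _
    _ ≤ r := by linarith [mem_ball.1 hx, mem_ball.1 hi]

lemma exists_finset_measure_compl_iUnion_ball_lt [MeasurableSpace X] [SeparableSpace X]
    [OpensMeasurableSpace X]
    (μ : Measure X) [IsFiniteMeasure μ] {r : ℝ} (hr : 0 < r) {ε : ℝ≥0∞} (hε : 0 < ε) :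
    ∃ t : Finset X, (∀ y ∈ t, μ (ball y r) ≠ 0) ∧ μ (⋃ y ∈ t, ball y r)ᶜ < ε := by
  obtain ⟨c, hc, hcd⟩ := exists_countable_dense X
  set c' := {y ∈ c | μ (ball y r) ≠ 0}
  have : Countable c' := (hc.mono (sep_subset _ _)).to_subtype
  have hnull : μ (⋃ t : Finset c', ⋃ y ∈ t, ball (y : X) r)ᶜ = 0 := by
    have hnull' : μ (⋃ y ∈ {y ∈ c | μ (ball y r) = 0}, ball y r) = 0 :=
      (measure_biUnion_null_iff (hc.mono (sep_subset _ _))).2 fun y hy => hy.2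
    -- every point lies in a ball centred in `c`, and the null such balls have null union
    refine measure_mono_null (fun x hx => ?_) hnull'
    obtain ⟨y, hyc, hxy⟩ := hcd.exists_dist_lt x hr
    simp only [mem_compl_iff, mem_iUnion] at hx
    simp only [mem_iUnion, mem_ofPred_eq]
    refine ⟨y, ⟨hyc, ?_⟩, hxy⟩
    by_contra hy
    exact hx ⟨{⟨y, hyc, hy⟩}, ⟨y, hyc, hy⟩, Finset.mem_singleton_self _, hxy⟩
  have hlim := tendsto_measure_iInter_atTop (μ := μ)
    (s := fun t : Finset c' => (⋃ y ∈ t, ball (y : X) r)ᶜ)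
    (fun t => (isOpen_biUnion fun _ _ => isOpen_ball).measurableSet.compl.nullMeasurableSet)
    (fun t u htu => compl_subset_compl.2 (biUnion_subset_biUnion_left htu))
    ⟨∅, measure_ne_top _ _⟩
  rw [← compl_iUnion, hnull] at hlim
  obtain ⟨t, ht⟩ := (hlim.eventually (gt_mem_nhds hε)).exists
  refine ⟨t.map (Function.Embedding.subtype _), ?_, ?_⟩
  · simp only [Finset.mem_map, Function.Embedding.coe_subtype]
    rintro _ ⟨y, -, rfl⟩
    exact y.2.2
  · simpa using ht

theorem tendsto_iidSamples_measure_compl_iUnion_closedBall [MeasurableSpace X] [SeparableSpace X]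
    [OpensMeasurableSpace X]
    (μ : Measure X) [IsProbabilityMeasure μ] {r : ℝ} (hr : 0 < r) {ε : ℝ≥0∞} (hε : 0 < ε) :
    Tendsto (fun N => iidSamples μ N {S | ε < μ (⋃ i, closedBall (S i) r)ᶜ}) atTop (𝓝 0) := by
  obtain ⟨t, ht_pos, ht_lt⟩ := exists_finset_measure_compl_iUnion_ball_lt μ (half_pos hr) hε
  have hbad : ∀ N, {S : Fin N → X | ε < μ (⋃ i, closedBall (S i) r)ᶜ} ⊆
      ⋃ y ∈ t, {S | ∀ i, S i ∉ ball y (r / 2)} := by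
    intro N S hS
    by_contra hmiss
    simp only [mem_iUnion, mem_ofPred_eq, not_exists, not_forall, not_not] at hmiss
    refine hS.not_ge ((measure_mono (compl_subset_compl.2 ?_)).trans ht_lt.le)
    exact iUnion_ball_subset_iUnion_closedBall fun y hy => hmiss y hy
  have hbound : ∀ N, iidSamples μ N {S : Fin N → X | ε < μ (⋃ i, closedBall (S i) r)ᶜ} ≤
      ∑ y ∈ t, μ (ball y (r / 2))ᶜ ^ N := fun N => by
    refine (measure_mono (hbad N)).trans ((measure_biUnion_finset_le _ _).trans_eq ?_)
    simp only [iidSamples_setOf_forall_notMem]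
  have hlim : Tendsto (fun N => ∑ y ∈ t, μ (ball y (r / 2))ᶜ ^ N) atTop (𝓝 0) := by
    simpa using tendsto_finsetSum t fun y hy => ENNReal.tendsto_pow_atTop_nhds_zero_of_lt_one
      ((prob_compl_eq_one_sub measurableSet_ball).trans_lt
        (ENNReal.sub_lt_self one_ne_top one_ne_zero (ht_pos y hy)))
  exact tendsto_of_tendsto_of_tendsto_of_le_of_le tendsto_const_nhds hlim (fun _ => zero_le)
    hbound

end Covering

/-- **Far-OOD detection.** If every domain of `𝒟` has ID and OOD supports at distance more than
`τ`, then OOD detection is non-uniformly learnable for `𝒟` in `𝒫(ℝⁿ)`; moreover the union of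
closed `τ`-balls around the samples always has OOD risk `0`, and its ID risk converges to `0`
in probability as the sample size tends to infinity. -/
theorem far_OOD_detection
    (n : ℕ) (τ : ℝ) (hτ : 0 < τ)
    (𝒟 : Set (Domain (Euc n))) (hprob : ∀ D ∈ 𝒟, D.IsProb)
    (hfar : ∀ D ∈ 𝒟, D.FSA τ)
    (α : ℝ) (hα : α ∈ Set.Ioo (0 : ℝ) 1) :
    NonUniformlyLearnable 𝒟 Set.univ α ∧
    (∀ D ∈ 𝒟, ∀ (N : ℕ) (S : Fin N → Euc n), (∀ i, S i ∈ msupport D.inD) →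
      D.outRisk (⋃ i, Metric.closedBall (S i) τ) = 0) ∧
    (∀ D ∈ 𝒟, ∀ ε : ℝ, 0 < ε →
      Filter.Tendsto
        (fun N => iidSamples D.inD N
          {S | ENNReal.ofReal ε < D.inRisk (⋃ i, Metric.closedBall (S i) τ)})
        Filter.atTop (nhds 0)) := by
  have hout : ∀ D ∈ 𝒟, ∀ (N : ℕ) (S : Fin N → Euc n), (∀ i, S i ∈ msupport D.inD) →
      D.outRisk (⋃ i, closedBall (S i) τ) = 0 := fun D hD _ _ hS =>
    Domain.outRisk_iUnion_closedBall_eq_zero (hfar D hD) hS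
  have hin : ∀ D ∈ 𝒟, ∀ ε : ℝ, 0 < ε → Tendsto (fun N => iidSamples D.inD N
      {S | ENNReal.ofReal ε < D.inRisk (⋃ i, closedBall (S i) τ)}) atTop (𝓝 0) := by
    intro D hD ε hε
    have := (hprob D hD).1
    exact tendsto_iidSamples_measure_compl_iUnion_closedBall D.inD hτ (ENNReal.ofReal_pos.2 hε)
  refine ⟨nonUniformlyLearnable_of_tendsto (fun D hD => (hprob D hD).1)
    (fun _ S => ⋃ i, closedBall (S i) τ) (fun _ _ => mem_univ _) fun D hD ε hε => ?_, hout, hin⟩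
  have := (hprob D hD).1
  refine tendsto_of_tendsto_of_tendsto_of_le_of_le tendsto_const_nhds (hin D hD ε hε)
    (fun _ => zero_le) fun N => measure_mono_ae ?_
  filter_upwards [ae_iidSamples_forall_mem (ae_mem_msupport D.inD) N] with S hS hlt
  exact hlt.trans_le (D.risk_le_inRisk_of_outRisk_eq_zero hα.1.le (hout D hD N S hS))
end
end

section
/- For any real τ > 0 and any α ∈ (0,1), let 𝒟^τ be the domain space of all domains over ℝⁿ satisfying the τ-Far Supports Assumption. Then OOD detection is not uniformly learnable for 𝒟^τ in 𝒫(ℝⁿ). (In particular, 𝒟^τ shatters arbitrarily large finite sets, so its VC dimension is infinite.) -/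
open MeasureTheory ENNReal Set Filter

noncomputable section

/-- A set `S` is shattered by a domain space `𝒟` if every subset of `S` is cut out as the trace
of the ID support of some domain in `𝒟` whose OOD support traces out the complement in `S`. -/
def DomShatters {X : Type*} [MeasurableSpace X] [TopologicalSpace X]
    (𝒟 : Set (Domain X)) (S : Set X) : Prop :=
  ∀ A ⊆ S, ∃ D ∈ 𝒟, msupport D.inD ∩ S = A ∧ msupport D.outD ∩ S = S \ A

/-!
Points of `ℝⁿ` spaced more than `τ` apart make every pair of uniform distributions on disjoint
finite sets of them a `τ`-FSA domain, and so shatter every finite set of such points (one spare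
point is added on each side so that both distributions exist).

For non-learnability, fix `ε = α (1 - α) / 4`, `δ = 1/4`, let `K = N(ε, δ)`, and take a set `G`
of `m + 1 ≥ 4K + 5` such points. For `q ∈ G` the domain `D_q` with `D_in` uniform on `G \ {q}`
and `D_out = δ_q` has optimal risk `0`. A hypothesis `h` that is `ε`-good for `D_q` must omit `q`
and miss at most a quarter of `G \ {q}`, so `h` is good for at most `m/4 + 1` of the `D_q`.
Counting pairs (sample tuple in `G^K`, domain it is good for) in two ways, a learner succeeding
with probability `3/4` on every `D_q` would give `3 (m + 1) m^K ≤ (m + 4) (m + 1)^K`, which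
contradicts `(1 + 1/m)^K ≤ exp (K/m) < 4/3`.
-/

open ProbabilityTheory
open scoped Finset

section UniformOn

variable {Ω : Type*} [MeasurableSpace Ω] [MeasurableSingletonClass Ω]

theorem ProbabilityTheory.uniformOn_finset_apply (F : Finset Ω) (t : Set Ω)
    [DecidablePred (· ∈ t)] :
    uniformOn (F : Set Ω) t = ENNReal.ofReal (#{x ∈ F | x ∈ t} / #F) := by
  classical
  have hinter : (F : Set Ω) ∩ t = ↑{x ∈ F | x ∈ t} := by ext; simp
  rw [← uniformOn_inter_self F.finite_toSet, hinter, uniformOn_apply_finset,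
    Finset.inter_filter, Finset.inter_self]
  rcases F.eq_empty_or_nonempty with rfl | hF
  · simp
  · rw [ENNReal.ofReal_div_of_pos (by exact_mod_cast hF.card_pos)]
    simp

theorem ProbabilityTheory.pi_uniformOn_finset {ι : Type*} [Fintype ι] [DecidableEq ι]
    (f : ι → Finset Ω) :
    Measure.pi (fun i ↦ uniformOn (f i : Set Ω)) = uniformOn ↑(Fintype.piFinset f) := by
  classical
  refine Measure.pi_eq fun t _ ↦ ?_
  have hfilter : {s ∈ Fintype.piFinset f | s ∈ Set.univ.pi t} =
      Fintype.piFinset fun i ↦ {x ∈ f i | x ∈ t i} := by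
    ext s; simp [Fintype.mem_piFinset, forall_and]
  simp_rw [uniformOn_finset_apply, hfilter, Fintype.card_piFinset]
  push_cast
  rw [← Finset.prod_div_distrib, ENNReal.ofReal_prod_of_nonneg fun _ _ ↦ by positivity]

theorem iidSamples_uniformOn_setOf (F : Finset Ω) (N : ℕ) (P : (Fin N → Ω) → Prop)
    [DecidablePred P] :
    iidSamples (uniformOn (F : Set Ω)) N {s | P s} =
      ENNReal.ofReal (#{s ∈ Fintype.piFinset fun _ ↦ F | P s} / #F ^ N) := by
  classical
  rw [iidSamples, pi_uniformOn_finset, uniformOn_finset_apply, Fintype.card_piFinset_const]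
  push_cast
  simp only [Set.mem_ofPred_eq]

theorem msupport_uniformOn [TopologicalSpace Ω] [T1Space Ω] (F : Finset Ω) :
    msupport (uniformOn (F : Set Ω)) = F := by
  ext x
  refine ⟨fun hx ↦ ?_, fun hx U _ hxU ↦ ?_⟩
  · by_contra hxF
    have := hx _ F.finite_toSet.isClosed.isOpen_compl hxF
    rw [pos_iff_ne_zero, Ne, uniformOn_eq_zero_iff F.finite_toSet] at this
    exact this (Set.inter_compl_self _)
  · rw [pos_iff_ne_zero, Ne, uniformOn_eq_zero_iff F.finite_toSet]
    exact Set.nonempty_iff_ne_empty.1 ⟨x, hx, hxU⟩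

end UniformOn

theorem ofReal_le_setEDist {X : Type*} [PseudoMetricSpace X] {c : ℝ} {A B : Set X}
    (h : ∀ x ∈ A, ∀ y ∈ B, c ≤ dist x y) : ENNReal.ofReal c ≤ setEDist A B :=
  le_iInf₂ fun x hx ↦ Metric.le_infEDist.2 fun y hy ↦ by
    rw [edist_dist]
    exact ENNReal.ofReal_le_ofReal (h x hx y hy)

theorem exists_infinite_pairwise_le_dist (E : Type*) [NormedAddCommGroup E] [NormedSpace ℝ E]
    [Nontrivial E] {c : ℝ} (hc : 0 < c) :
    ∃ Y : Set E, Y.Infinite ∧ Y.Pairwise fun x y ↦ c ≤ dist x y := by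
  obtain ⟨v, hv⟩ := exists_norm_eq E zero_le_one
  have hsep (i j : ℕ) (hij : i ≠ j) : c ≤ dist ((c * i) • v) ((c * j) • v) := by
    have hij' : (1 : ℝ) ≤ |(i : ℝ) - j| := by
      exact_mod_cast Int.one_le_abs (sub_ne_zero.2 (Nat.cast_injective.ne hij : (i : ℤ) ≠ j))
    rw [dist_eq_norm, ← sub_smul, norm_smul, hv, mul_one, ← mul_sub, norm_mul,
      Real.norm_of_nonneg hc.le, Real.norm_eq_abs]
    nlinarith
  refine ⟨Set.range fun i : ℕ ↦ (c * i) • v, Set.infinite_range_of_injective fun i j h ↦ ?_, ?_⟩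
  · by_contra hij
    have := hsep i j hij
    rw [h, dist_self] at this
    linarith
  · rintro _ ⟨i, rfl⟩ _ ⟨j, rfl⟩ hne
    exact hsep i j fun hij ↦ hne (hij ▸ rfl)

namespace Domain

variable {X : Type*} [MeasurableSpace X]

@[simps]
def uniform (A B : Finset X) : Domain X :=
  ⟨uniformOn A, uniformOn B⟩

variable [MeasurableSingletonClass X] {A B : Finset X}

theorem isProb_uniform (hA : A.Nonempty) (hB : B.Nonempty) : (uniform A B).IsProb :=
  ⟨isProbabilityMeasure_uniformOn A.finite_toSet hA,
    isProbabilityMeasure_uniformOn B.finite_toSet hB⟩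

theorem fsa_uniform {n : ℕ} {τ c : ℝ} (hc : 0 < c) (hτc : τ < c) {A B : Finset (Euc n)}
    (hAB : ∀ x ∈ A, ∀ y ∈ B, c ≤ dist x y) : (uniform A B).FSA τ := by
  rw [FSA, uniform, msupport_uniformOn, msupport_uniformOn]
  exact ((ENNReal.ofReal_lt_ofReal_iff hc).2 hτc).trans_le (ofReal_le_setEDist hAB)

theorem iInf_risk_uniform_eq_zero (hAB : Disjoint A B) (α : ℝ) :
    ⨅ h ∈ (Set.univ : Set (Set X)), (uniform A B).risk α h = 0 := by
  refine le_antisymm ((iInf₂_le (A : Set X) trivial).trans_eq ?_) bot_le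
  rw [risk, uniform, (uniformOn_eq_zero_iff A.finite_toSet).2 (Set.inter_compl_self _),
    (uniformOn_eq_zero_iff B.finite_toSet).2 (Finset.disjoint_coe.2 hAB.symm).inter_eq]
  simp

variable {α ε : ℝ} {h : Set X}

theorem notMem_of_risk_uniform_singleton_le (hα : 0 < α) (hεα : ε < α) {q : X}
    (hrisk : (uniform A {q}).risk α h ≤ ENNReal.ofReal ε) : q ∉ h := by
  classical
  intro hq
  rw [risk, uniform, Finset.coe_singleton] at hrisk
  have hout := le_add_self.trans hrisk
  rw [uniformOn_singleton, if_pos hq, mul_one] at hout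
  exact hout.not_gt ((ENNReal.ofReal_lt_ofReal_iff hα).2 hεα)

theorem four_mul_card_filter_notMem_le_of_risk_uniform_le [DecidablePred (· ∈ h)] (hα : α < 1)
    (hε0 : 0 ≤ ε) (hε : 4 * ε ≤ 1 - α) (hrisk : (uniform A B).risk α h ≤ ENNReal.ofReal ε) :
    4 * #{x ∈ A | x ∉ h} ≤ #A := by
  have hk : #{x ∈ A | x ∉ h} ≤ #A := Finset.card_filter_le _ _
  rcases (#A).eq_zero_or_pos with hA | hA
  · omega
  rw [risk, uniform] at hrisk
  have hin := le_self_add.trans hrisk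
  rw [uniformOn_finset_apply, ← ENNReal.ofReal_mul (by linarith),
    ENNReal.ofReal_le_ofReal_iff hε0] at hin
  simp only [Set.mem_compl_iff] at hin
  have hA' : (0 : ℝ) < #A := by exact_mod_cast hA
  rw [mul_div_assoc', div_le_iff₀ hA'] at hin
  have : (4 : ℝ) * #{x ∈ A | x ∉ h} ≤ #A := by nlinarith
  exact_mod_cast this

theorem four_mul_card_filter_risk_uniform_erase_le [DecidableEq X] (hα : α ∈ Set.Ioo 0 1)
    (hε0 : 0 ≤ ε) (hεα : ε < α) (hε : 4 * ε ≤ 1 - α) (G : Finset X) (h : Set X) :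
    4 * #{q ∈ G | (uniform (G.erase q) {q}).risk α h ≤ ENNReal.ofReal ε} ≤ #G + 3 := by
  classical
  set Q := {q ∈ G | (uniform (G.erase q) {q}).risk α h ≤ ENNReal.ofReal ε}
  rcases Q.eq_empty_or_nonempty with hQ | ⟨q₀, hq₀⟩
  · simp [hQ]
  obtain ⟨hq₀G, hq₀⟩ := Finset.mem_filter.1 hq₀
  have hQ : Q ⊆ insert q₀ {x ∈ G.erase q₀ | x ∉ h} := by
    intro q hq
    obtain ⟨hqG, hq⟩ := Finset.mem_filter.1 hq
    rcases eq_or_ne q q₀ with rfl | hne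
    · exact Finset.mem_insert_self _ _
    · exact Finset.mem_insert_of_mem (Finset.mem_filter.2
        ⟨Finset.mem_erase.2 ⟨hne, hqG⟩, notMem_of_risk_uniform_singleton_le hα.1 hεα hq⟩)
  have hmissed := four_mul_card_filter_notMem_le_of_risk_uniform_le hα.2 hε0 hε hq₀
  have hQcard := (Finset.card_le_card hQ).trans (Finset.card_insert_le _ _)
  have hGpos := Finset.card_pos.2 ⟨q₀, hq₀G⟩
  rw [Finset.card_erase_of_mem hq₀G] at hmissed
  omega

end Domain

theorem add_four_mul_succ_pow_lt {m K : ℕ} (hm : 2 ≤ m) (hK : 4 * K ≤ m) :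
    (m + 4) * (m + 1) ^ K < 3 * (m + 1) * m ^ K := by
  have hm0 : (0 : ℝ) < m := by exact_mod_cast (by omega : 0 < m)
  have hK' : (4 : ℝ) * K ≤ m := by exact_mod_cast hK
  have hm' : (2 : ℝ) ≤ m := by exact_mod_cast hm
  have hratio : ((m + 1 : ℝ) / m) ^ K < 4 / 3 := calc
    ((m + 1 : ℝ) / m) ^ K = (1 / m + 1) ^ K := by rw [add_div, div_self hm0.ne', add_comm]
    _ ≤ Real.exp (1 / m) ^ K := pow_le_pow_left₀ (by positivity) (Real.add_one_le_exp _) K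
    _ = Real.exp (K / m) := by rw [← Real.exp_nat_mul, mul_one_div]
    _ ≤ Real.exp (1 / 4) := Real.exp_le_exp.2 (by rw [div_le_iff₀ hm0]; linarith)
    _ < 1 / (1 - 1 / 4) := Real.exp_bound_div_one_sub_of_interval' (by norm_num) (by norm_num)
    _ = 4 / 3 := by norm_num
  rw [div_pow, div_lt_iff₀ (by positivity)] at hratio
  have : ((m : ℝ) + 4) * ((m : ℝ) + 1) ^ K < 3 * ((m : ℝ) + 1) * (m : ℝ) ^ K := calc
    ((m : ℝ) + 4) * ((m : ℝ) + 1) ^ K < ((m : ℝ) + 4) * (4 / 3 * (m : ℝ) ^ K) :=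
      mul_lt_mul_of_pos_left hratio (by positivity)
    _ ≤ 3 * ((m : ℝ) + 1) * (m : ℝ) ^ K := by
      rw [← mul_assoc]
      exact mul_le_mul_of_nonneg_right (by linarith) (by positivity)
  exact_mod_cast this

section LeaveOneOut

variable {X : Type*} [MeasurableSpace X] [MeasurableSingletonClass X] [DecidableEq X]

theorem not_uniformlyLearnable_of_uniform_erase_mem {𝒟 : Set (Domain X)} {α : ℝ}
    (hα : α ∈ Set.Ioo 0 1)
    (h𝒟 : ∀ m : ℕ, ∃ G : Finset X, m ≤ #G ∧ ∀ q ∈ G, Domain.uniform (G.erase q) {q} ∈ 𝒟) :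
    ¬ UniformlyLearnable 𝒟 Set.univ α := by
  rintro ⟨N, A, -, hA⟩
  obtain ⟨hα0, hα1⟩ := hα
  set ε := α * (1 - α) / 4 with hε_def
  have hε0 : 0 < ε := div_pos (mul_pos hα0 (sub_pos.2 hα1)) four_pos
  have hεα : ε < α := by nlinarith
  have hε : 4 * ε ≤ 1 - α := by nlinarith
  set K := N ε (1 / 4)
  obtain ⟨G, hGK, hG𝒟⟩ := h𝒟 (4 * K + 5)
  obtain ⟨m, hG⟩ : ∃ m, #G = m + 1 := ⟨#G - 1, by omega⟩
  have hm : (0 : ℝ) < m := by exact_mod_cast (by omega : 0 < m)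
  let good (q : X) (s : Fin K → X) : Prop :=
    (Domain.uniform (G.erase q) {q}).risk α (A ε (1 / 4) K s) ≤ ENNReal.ofReal ε
  have hsuccess (q) (hq : q ∈ G) :
      3 * m ^ K ≤ 4 * #{s ∈ Fintype.piFinset fun _ ↦ G.erase q | good q s} := by
    have hlearn := hA ε (1 / 4) hε0 (by linarith) (by norm_num) (by norm_num) _ (hG𝒟 q hq)
    rw [Domain.iInf_risk_uniform_eq_zero
        (Finset.disjoint_singleton_right.2 (Finset.notMem_erase q G)),
      zero_add, Domain.uniform_inD, iidSamples_uniformOn_setOf,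
      ENNReal.ofReal_le_ofReal_iff (by positivity), Finset.card_erase_of_mem hq, hG,
      Nat.add_sub_cancel, le_div_iff₀ (pow_pos hm K)] at hlearn
    replace hlearn : (1 - 1 / 4 : ℝ) * m ^ K ≤
        #{s ∈ Fintype.piFinset fun _ ↦ G.erase q | good q s} := hlearn
    have : (3 : ℝ) * m ^ K ≤ 4 * #{s ∈ Fintype.piFinset fun _ ↦ G.erase q | good q s} := by
      linarith
    exact_mod_cast this
  have hcount : 3 * (m + 1) * m ^ K ≤ (m + 4) * (m + 1) ^ K := calc
    3 * (m + 1) * m ^ K = ∑ q ∈ G, 3 * m ^ K := by rw [Finset.sum_const, hG, smul_eq_mul]; ring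
    _ ≤ ∑ q ∈ G, 4 * #{s ∈ Fintype.piFinset fun _ ↦ G.erase q | good q s} :=
      Finset.sum_le_sum hsuccess
    _ ≤ ∑ q ∈ G, 4 * #{s ∈ Fintype.piFinset fun _ ↦ G | good q s} := by
      gcongr with q
      exact Fintype.piFinset_subset _ _ fun _ ↦ G.erase_subset q
    _ = ∑ s ∈ Fintype.piFinset fun _ ↦ G, 4 * #{q ∈ G | good q s} := by
      rw [← Finset.mul_sum, ← Finset.mul_sum]
      exact congrArg _ (Finset.sum_card_bipartiteAbove_eq_sum_card_bipartiteBelow good)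
    _ ≤ ∑ s ∈ Fintype.piFinset fun _ ↦ G, (m + 4) := Finset.sum_le_sum fun s _ ↦ by
      have : 4 * #{q ∈ G | good q s} ≤ #G + 3 :=
        Domain.four_mul_card_filter_risk_uniform_erase_le ⟨hα0, hα1⟩ hε0.le hεα hε G _
      omega
    _ = (m + 4) * (m + 1) ^ K := by simp [hG, mul_comm]
  exact (add_four_mul_succ_pow_lt (by omega) (by omega)).not_ge hcount

end LeaveOneOut

section FarSupports

variable {n : ℕ} {τ c : ℝ} {Y : Set (Euc n)}

theorem Domain.uniform_mem_fsa_of_pairwise (hY : Y.Pairwise fun x y ↦ c ≤ dist x y) (hc : 0 < c)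
    (hτc : τ < c) {A B : Finset (Euc n)} (hA : A.Nonempty) (hB : B.Nonempty) (hAY : ↑A ⊆ Y)
    (hBY : ↑B ⊆ Y) (hAB : Disjoint A B) :
    Domain.uniform A B ∈ {D : Domain (Euc n) | D.IsProb ∧ D.FSA τ} :=
  ⟨Domain.isProb_uniform hA hB, Domain.fsa_uniform hc hτc fun _ hx _ hy ↦
    hY (hAY hx) (hBY hy) ((Finset.disjoint_coe.2 hAB).ne_of_mem hx hy)⟩

theorem domShatters_fsa_of_pairwise (hY : Y.Pairwise fun x y ↦ c ≤ dist x y) (hc : 0 < c)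
    (hτc : τ < c) {S : Finset (Euc n)} (hSY : ↑S ⊆ Y) (hYS : (Y \ S).Nontrivial) :
    DomShatters {D : Domain (Euc n) | D.IsProb ∧ D.FSA τ} S := by
  obtain ⟨a, ⟨haY, haS⟩, b, ⟨hbY, hbS⟩, hab⟩ := hYS
  intro A hAS
  obtain ⟨A, rfl⟩ : ∃ A' : Finset (Euc n), ↑A' = A :=
    ⟨(S.finite_toSet.subset hAS).toFinset, Set.Finite.coe_toFinset _⟩
  rw [Finset.coe_subset] at hAS
  refine ⟨Domain.uniform (insert a A) (insert b (S \ A)),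
    Domain.uniform_mem_fsa_of_pairwise hY hc hτc (Finset.insert_nonempty _ _)
      (Finset.insert_nonempty _ _) ?_ ?_ ?_, ?_, ?_⟩
  · simp only [Finset.coe_insert]
    exact Set.insert_subset haY ((Finset.coe_subset.2 hAS).trans hSY)
  · simp only [Finset.coe_insert, Finset.coe_sdiff]
    exact Set.insert_subset hbY (Set.sdiff_subset.trans hSY)
  · rw [Finset.mem_coe] at haS hbS
    simp only [Finset.disjoint_insert_left, Finset.disjoint_insert_right, Finset.mem_insert,
      Finset.mem_sdiff, Finset.disjoint_sdiff]
    refine ⟨?_, fun h ↦ haS h.1, trivial⟩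
    rintro (rfl | h)
    exacts [hab rfl, hbS (hAS h)]
  · rw [Domain.uniform_inD, msupport_uniformOn, Finset.coe_insert, Set.insert_inter_of_notMem haS,
      Set.inter_eq_left.2 (Finset.coe_subset.2 hAS)]
  · rw [Domain.uniform_outD, msupport_uniformOn, Finset.coe_insert, Set.insert_inter_of_notMem hbS,
      Finset.coe_sdiff, Set.inter_eq_left.2 Set.sdiff_subset]

end FarSupports

/-- **τ-FSA does not imply uniform learnability.** The space `𝒟^τ` of all domains over `ℝⁿ`
whose ID and OOD supports are more than `τ` apart shatters arbitrarily large finite sets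
(so it has infinite VC dimension), and OOD detection is not uniformly learnable for it. -/
theorem fsa_not_uniformly_learnable
    (n : ℕ) (hn : 1 ≤ n) (τ : ℝ) (hτ : 0 < τ) (α : ℝ) (hα : α ∈ Set.Ioo (0 : ℝ) 1) :
    (∀ k : ℕ, ∃ S : Finset (Euc n), S.card = k ∧
      DomShatters {D : Domain (Euc n) | D.IsProb ∧ D.FSA τ} ↑S) ∧
    ¬ UniformlyLearnable {D : Domain (Euc n) | D.IsProb ∧ D.FSA τ} Set.univ α := by
  have : NeZero n := ⟨by omega⟩
  have hc : 0 < τ + 1 := by linarith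
  obtain ⟨Y, hYinf, hY⟩ := exists_infinite_pairwise_le_dist (Euc n) hc
  refine ⟨fun k ↦ ?_, not_uniformlyLearnable_of_uniform_erase_mem hα fun m ↦ ?_⟩
  · obtain ⟨S, hSY, hS⟩ := hYinf.exists_subset_card_eq k
    exact ⟨S, hS, domShatters_fsa_of_pairwise hY hc (lt_add_one τ) hSY
      (hYinf.sdiff S.finite_toSet).nontrivial⟩
  · obtain ⟨G, hGY, hG⟩ := hYinf.exists_subset_card_eq (m + 2)
    refine ⟨G, by omega, fun q hq ↦ Domain.uniform_mem_fsa_of_pairwise hY hc (lt_add_one τ) ?_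
      (Finset.singleton_nonempty q) ((Finset.coe_subset.2 (G.erase_subset q)).trans hGY)
      (by simpa using hGY hq) (Finset.disjoint_singleton_right.2 (Finset.notMem_erase q G))⟩
    rw [← Finset.card_pos, Finset.card_erase_of_mem hq]
    omega
end
end
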